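/- arXiv:1710.07518 — 2 statements merged into one kernel-verified Lean document; each statement's English description precedes it below -/
import Mathlib

section
/- Let K be a group acting on a set X and θ : K → G a group homomorphism such that every non-identity element of F = ker θ acts on X without fixed points. If κ and κ' are non-trivial elements of K of finite order with θ(κ) = θ(κ'), then the saturations F·Fix(κ) and F·Fix(κ') are either equal or disjoint. -/
/-!
A point `x` lies in `F • Fix κ` exactly when some `F`-conjugate of `κ` fixes `x`, and conjugating
`κ` by an element of `F` does not change `F • Fix κ`. If `x` lies in both saturations, the
`F`-conjugates of `κ` and `κ'` fixing `x` have the same `θ`-image, so they differ by an element of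
`F` fixing `x`; freeness makes them equal, and hence the two saturations coincide.
-/

/-- The `ker θ`-saturation of the fixed-point set of `κ` in `X`. -/
def kerSaturatedFix {K G : Type*} (X : Type*) [Group K] [Group G] [MulAction K X]
    (θ : K →* G) (κ : K) : Set X :=
  {x : X | ∃ γ ∈ θ.ker, ∃ y : X, κ • y = y ∧ γ • y = x}

section

variable {K G X : Type*} [Group K] [Group G] [MulAction K X] {θ : K →* G}

theorem mem_kerSaturatedFix_iff {κ : K} {x : X} :
    x ∈ kerSaturatedFix X θ κ ↔ ∃ γ ∈ θ.ker, (γ * κ * γ⁻¹) • x = x := by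
  constructor
  · rintro ⟨γ, hγ, y, hy, rfl⟩
    exact ⟨γ, hγ, by simp only [mul_smul, inv_smul_smul, hy]⟩
  · rintro ⟨γ, hγ, hx⟩
    refine ⟨γ, hγ, γ⁻¹ • x, ?_, smul_inv_smul γ x⟩
    rwa [mul_smul, mul_smul, smul_eq_iff_eq_inv_smul] at hx

theorem kerSaturatedFix_conj {δ : K} (hδ : δ ∈ θ.ker) (κ : K) :
    kerSaturatedFix X θ (δ * κ * δ⁻¹) = kerSaturatedFix X θ κ := by
  ext x
  simp only [mem_kerSaturatedFix_iff]
  constructor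
  · rintro ⟨γ, hγ, hx⟩
    exact ⟨γ * δ, mul_mem hγ hδ, by simpa only [mul_assoc, mul_inv_rev] using hx⟩
  · rintro ⟨γ, hγ, hx⟩
    refine ⟨γ * δ⁻¹, mul_mem hγ (inv_mem hδ), ?_⟩
    simpa only [mul_assoc, mul_inv_rev, inv_inv, inv_mul_cancel_left] using hx

theorem eq_of_map_eq_of_smul_eq
    (hfree : ∀ f : K, f ∈ θ.ker → f ≠ 1 → ∀ x : X, f • x ≠ x)
    {κ κ' : K} (hθ : θ κ = θ κ') {x : X} (hx : κ • x = x) (hx' : κ' • x = x) : κ = κ' := by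
  by_contra hne
  refine hfree (κ⁻¹ * κ') (by simp [hθ]) (by rwa [ne_eq, inv_mul_eq_one]) x ?_
  rw [mul_smul, hx', inv_smul_eq_iff, hx]

end

theorem kerSaturatedFix_eq_or_disjoint_general
    {K G X : Type*} [Group K] [Group G] [MulAction K X]
    (θ : K →* G)
    (hfree : ∀ f : K, f ∈ θ.ker → f ≠ 1 → ∀ x : X, f • x ≠ x)
    (κ κ' : K)
    (hθ : θ κ = θ κ') :
    kerSaturatedFix X θ κ = kerSaturatedFix X θ κ' ∨
      kerSaturatedFix X θ κ ∩ kerSaturatedFix X θ κ' = (∅ : Set X) := by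
  rcases (kerSaturatedFix X θ κ ∩ kerSaturatedFix X θ κ').eq_empty_or_nonempty
    with h | ⟨x, hx, hx'⟩
  · exact Or.inr h
  obtain ⟨γ, hγ, hfix⟩ := mem_kerSaturatedFix_iff.1 hx
  obtain ⟨γ', hγ', hfix'⟩ := mem_kerSaturatedFix_iff.1 hx'
  have hconj : γ * κ * γ⁻¹ = γ' * κ' * γ'⁻¹ :=
    eq_of_map_eq_of_smul_eq hfree (by simp [MonoidHom.mem_ker.1 hγ, MonoidHom.mem_ker.1 hγ', hθ])
      hfix hfix'
  left
  rw [← kerSaturatedFix_conj hγ, hconj, kerSaturatedFix_conj hγ']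

/-- if `F = ker θ` acts freely on `X`, then for non-trivial
finite-order `κ, κ'` with the same `θ`-image, the saturations `F ⬝ Fix κ` and
`F ⬝ Fix κ'` are either equal or disjoint. -/
theorem kerSaturatedFix_eq_or_disjoint
    {K G X : Type*} [Group K] [Group G] [MulAction K X]
    (θ : K →* G)
    (hfree : ∀ f : K, f ∈ θ.ker → f ≠ 1 → ∀ x : X, f • x ≠ x)
    (κ κ' : K) (hκ : κ ≠ 1) (hκ' : κ' ≠ 1)
    (hfin : IsOfFinOrder κ) (hfin' : IsOfFinOrder κ')
    (hθ : θ κ = θ κ') :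
    kerSaturatedFix X θ κ = kerSaturatedFix X θ κ' ∨
      kerSaturatedFix X θ κ ∩ kerSaturatedFix X θ κ' = (∅ : Set X) :=
  kerSaturatedFix_eq_or_disjoint_general θ hfree κ κ' hθ
end

section
/- Let K = ℤ/2 ∗ ℤ/2 ∗ ℤ/2 be the free product of three copies of the cyclic group of order 2, with κ₁, κ₂, κ₃ the images in K of the generators of the three factors, and let θ : K → (ℤ/2)³ be the homomorphism determined by sending κᵢ to the i-th standard generator of (ℤ/2)³. Then the kernel of θ is a free group of rank 5, i.e. ker θ is isomorphic to the free group on 5 generators. -/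
/-!
Reidemeister–Schreier for `θ`. Let `K` act on `(ℤ/2)³ × F₅` by `κₛ • (t, w) = (eₛ t, δ(t, s) w)`,
where `δ` is `1` on the edges of the cube (the Schreier graph of `θ`) in the spanning tree of the
transversal `r(t) = κ₀^{t₀} κ₁^{t₁} κ₂^{t₂}` and labels the five remaining pairs of opposite edges
by the free generators and their inverses. Sending each free generator to the Schreier generator
of its edge gives `j : F₅ → K` for which `(t, w) ↦ r(t) j(w)` is `K`-equivariant. Hence every
`g ∈ ker θ` equals `j(w)` where `g • (1, 1) = (1, w)`, and `j(w) • (1, 1) = (1, w)` makes `j`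
injective.
-/

/-- The generator of the `i`-th free factor of `ℤ/2 ∗ ℤ/2 ∗ ℤ/2`. -/
def kappa (i : Fin 3) : Monoid.CoprodI (fun _ : Fin 3 => Multiplicative (ZMod 2)) :=
  Monoid.CoprodI.of (i := i) (Multiplicative.ofAdd (1 : ZMod 2))

/-- The homomorphism `ℤ/2 ∗ ℤ/2 ∗ ℤ/2 → (ℤ/2)³` sending the generator of the `i`-th
factor to the `i`-th standard generator of `(ℤ/2)³`. -/
def theta : Monoid.CoprodI (fun _ : Fin 3 => Multiplicative (ZMod 2)) →*
    (Fin 3 → Multiplicative (ZMod 2)) :=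
  Monoid.CoprodI.lift
    (fun i => MonoidHom.mulSingle (fun _ : Fin 3 => Multiplicative (ZMod 2)) i)

open Monoid Function

def zmodPowHom {M : Type*} [Monoid M] {n : ℕ} [NeZero n] (σ : M) (hσ : σ ^ n = 1) :
    Multiplicative (ZMod n) →* M where
  toFun x := σ ^ x.toAdd.val
  map_one' := by rw [toAdd_one, ZMod.val_zero, pow_zero]
  map_mul' x y := by rw [← pow_add, toAdd_mul, ZMod.val_add, ← pow_eq_pow_mod _ hσ]

theorem zmodPowHom_ofAdd_one {M : Type*} [Monoid M] {n : ℕ} [Fact (1 < n)] (σ : M)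
    (hσ : σ ^ n = 1) : zmodPowHom σ hσ (.ofAdd 1) = σ := by
  rw [zmodPowHom, MonoidHom.coe_mk, OneHom.coe_mk, toAdd_ofAdd, ZMod.val_one, pow_one]

section Transversal

variable {G A H : Type*} [Group G] [Group A] [Group H]

theorem ker_eq_range_of_equivariant (θ : G →* A) (j : H →* G) (Φ : G →* Equiv.Perm (A × H))
    (rep : A → G) (hrep : rep 1 = 1) (hfst : ∀ g p, (Φ g p).1 = θ g * p.1)
    (hequiv : ∀ g p, rep (Φ g p).1 * j (Φ g p).2 = g * (rep p.1 * j p.2))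
    (hj : ∀ h, Φ (j h) (1, 1) = (1, h)) : θ.ker = j.range := by
  ext g
  constructor
  · intro hg
    have hfst_one : (Φ g (1, 1)).1 = 1 := by rw [hfst, θ.mem_ker.1 hg, one_mul]
    refine ⟨(Φ g (1, 1)).2, ?_⟩
    simpa [hfst_one, hrep] using hequiv g (1, 1)
  · rintro ⟨h, rfl⟩
    simpa [hj] using (hfst (j h) (1, 1)).symm

theorem nonempty_ker_mulEquiv_of_equivariant (θ : G →* A) (j : H →* G)
    (Φ : G →* Equiv.Perm (A × H)) (rep : A → G) (hrep : rep 1 = 1)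
    (hfst : ∀ g p, (Φ g p).1 = θ g * p.1)
    (hequiv : ∀ g p, rep (Φ g p).1 * j (Φ g p).2 = g * (rep p.1 * j p.2))
    (hj : ∀ h, Φ (j h) (1, 1) = (1, h)) : Nonempty (θ.ker ≃* H) := by
  have hinj : Injective j :=
    LeftInverse.injective (g := fun g => (Φ g (1, 1)).2) fun h => congrArg Prod.snd (hj h)
  exact ⟨(MulEquiv.subgroupCongr (ker_eq_range_of_equivariant θ j Φ rep hrep hfst hequiv hj)).trans
    (MonoidHom.ofInjective hinj).symm⟩

theorem apply_one_one_of_apply_of {α : Type*} (j : FreeGroup α →* G)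
    (Φ : G →* Equiv.Perm (A × FreeGroup α))
    (hright : ∀ g p h, Φ g (p.1, p.2 * h) = ((Φ g p).1, (Φ g p).2 * h))
    (hof : ∀ a, Φ (j (.of a)) (1, 1) = (1, .of a)) (w : FreeGroup α) :
    Φ (j w) (1, 1) = (1, w) := by
  suffices hw : ∀ h, Φ (j w) (1, h) = (1, w * h) by simpa using hw 1
  induction w using FreeGroup.induction_on with
  | C1 => simp
  | of a => intro h; simpa [hof] using hright (j (.of a)) (1, 1) h
  | inv_of a ih =>
    intro h
    have hback := congrArg (Φ (j (.of a)⁻¹)) (ih ((FreeGroup.of a)⁻¹ * h))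
    rw [← Equiv.Perm.mul_apply, ← map_mul, ← map_mul] at hback
    simpa using hback.symm
  | mul x y hx hy => intro h; rw [map_mul, map_mul, Equiv.Perm.mul_apply, hy, hx, mul_assoc]

end Transversal

abbrev InvolutionCoprod (ι : Type*) := CoprodI fun _ : ι => Multiplicative (ZMod 2)

namespace InvolutionCoprod

variable {ι : Type*}

abbrev of (s : ι) : Multiplicative (ZMod 2) →* InvolutionCoprod ι :=
  CoprodI.of (M := fun _ : ι => Multiplicative (ZMod 2)) (i := s)

abbrev gen (s : ι) : InvolutionCoprod ι := of s (.ofAdd 1)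

theorem gen_mul_self (s : ι) : gen s * gen s = 1 := by
  rw [← map_mul, ← ofAdd_add]
  exact map_one _

theorem gen_inv (s : ι) : (gen s)⁻¹ = gen s :=
  inv_eq_of_mul_eq_one_right (gen_mul_self s)

theorem gen_mul_gen_mul (s : ι) (x : InvolutionCoprod ι) : gen s * (gen s * x) = x := by
  rw [← mul_assoc, gen_mul_self, one_mul]

theorem eq_one_or_eq_ofAdd_one : ∀ m : Multiplicative (ZMod 2), m = 1 ∨ m = .ofAdd 1 := by
  decide

@[elab_as_elim]
theorem induction_on {motive : InvolutionCoprod ι → Prop} (g : InvolutionCoprod ι)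
    (one : motive 1) (gen : ∀ s, motive (gen s))
    (mul : ∀ x y, motive x → motive y → motive (x * y)) : motive g := by
  induction g using CoprodI.induction_on with
  | one => exact one
  | of s m =>
    rcases eq_one_or_eq_ofAdd_one m with rfl | rfl
    · simpa using one
    · exact gen s
  | mul x y hx hy => exact mul x y hx hy

variable {A H : Type*} [Group A] [Group H] (e : ι → A) (δ : A → ι → H)
  (he : ∀ s, e s * e s = 1) (hδ : ∀ t s, δ (e s * t) s * δ t s = 1)

def schreierPerm (s : ι) : Equiv.Perm (A × H) where
  toFun p := (e s * p.1, δ p.1 s * p.2)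
  invFun p := (e s * p.1, δ p.1 s * p.2)
  left_inv p := by simp only [← mul_assoc, he, hδ, one_mul]
  right_inv p := by simp only [← mul_assoc, he, hδ, one_mul]

theorem schreierPerm_sq (s : ι) : schreierPerm e δ he hδ s ^ 2 = 1 :=
  Equiv.ext (schreierPerm e δ he hδ s).left_inv

def schreierAction : InvolutionCoprod ι →* Equiv.Perm (A × H) :=
  CoprodI.lift fun s => zmodPowHom _ (schreierPerm_sq e δ he hδ s)

theorem schreierAction_gen (s : ι) (p : A × H) :
    schreierAction e δ he hδ (gen s) p = (e s * p.1, δ p.1 s * p.2) := by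
  rw [schreierAction, CoprodI.lift_of (i := s), zmodPowHom_ofAdd_one]
  rfl

theorem schreierAction_mul_apply (x y : InvolutionCoprod ι) (p : A × H) :
    schreierAction e δ he hδ (x * y) p =
      schreierAction e δ he hδ x (schreierAction e δ he hδ y p) := by
  rw [map_mul]
  rfl

theorem fst_schreierAction (θ : InvolutionCoprod ι →* A) (hθ : ∀ s, θ (gen s) = e s)
    (g : InvolutionCoprod ι) (p : A × H) : (schreierAction e δ he hδ g p).1 = θ g * p.1 := by
  induction g using induction_on generalizing p with
  | one => simp
  | gen s => rw [schreierAction_gen, hθ]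
  | mul x y hx hy => rw [schreierAction_mul_apply, hx, hy, map_mul, mul_assoc]

theorem schreierAction_mul_right (g : InvolutionCoprod ι) (p : A × H) (h : H) :
    schreierAction e δ he hδ g (p.1, p.2 * h) =
      ((schreierAction e δ he hδ g p).1, (schreierAction e δ he hδ g p).2 * h) := by
  induction g using induction_on generalizing p with
  | one => simp
  | gen s => simp only [schreierAction_gen, mul_assoc]
  | mul x y hx hy => rw [schreierAction_mul_apply, hy, hx, schreierAction_mul_apply]

theorem rep_mul_schreierAction (rep : A → InvolutionCoprod ι) (j : H →* InvolutionCoprod ι)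
    (hrep : ∀ t s, rep (e s * t) * j (δ t s) = gen s * rep t)
    (g : InvolutionCoprod ι) (p : A × H) :
    rep (schreierAction e δ he hδ g p).1 * j (schreierAction e δ he hδ g p).2 =
      g * (rep p.1 * j p.2) := by
  induction g using induction_on generalizing p with
  | one => simp
  | gen s => rw [schreierAction_gen, map_mul, ← mul_assoc, hrep, mul_assoc]
  | mul x y hx hy => rw [schreierAction_mul_apply, hx, hy, mul_assoc]

end InvolutionCoprod

open InvolutionCoprod

abbrev Cube := Fin 3 → Multiplicative (ZMod 2)

abbrev cubeBasis (s : Fin 3) : Cube := Pi.mulSingle s (.ofAdd 1)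

theorem cubeBasis_mul_self (s : Fin 3) : cubeBasis s * cubeBasis s = 1 := by
  rw [← Pi.mulSingle_mul, ← ofAdd_add]
  exact Pi.mulSingle_one s

theorem theta_gen (s : Fin 3) : theta (gen s) = cubeBasis s := by
  rw [theta, CoprodI.lift_of (i := s), MonoidHom.mulSingle_apply]

def orient (x : Multiplicative (ZMod 2)) (g : FreeGroup (Fin 5)) : FreeGroup (Fin 5) :=
  if x = 1 then g else g⁻¹

/-- In multiplicative notation `t i = 1` says that the `i`-th coordinate of `t` is `0`. -/
def schreierLabel (t : Cube) : Fin 3 → FreeGroup (Fin 5) :=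
  ![1,
    if t 0 = 1 then 1 else orient (t 1) (.of (if t 2 = 1 then 0 else 1)),
    if t 0 = 1 ∧ t 1 = 1 then 1 else
      orient (t 2) (.of (if t 1 = 1 then 2 else if t 0 = 1 then 3 else 4))]

theorem schreierLabel_mul_schreierLabel :
    ∀ t s, schreierLabel (cubeBasis s * t) s * schreierLabel t s = 1 := by
  decide

def transversal (t : Cube) : InvolutionCoprod (Fin 3) :=
  of 0 (t 0) * of 1 (t 1) * of 2 (t 2)

theorem transversal_one : transversal 1 = 1 := by
  simp [transversal]

/-- The Schreier generators `r(eₛ t)⁻¹ κₛ r(t)` of the edges labelled `0, …, 4` by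
`schreierLabel`. -/
def freeBasis : FreeGroup (Fin 5) →* InvolutionCoprod (Fin 3) :=
  FreeGroup.lift ![gen 1 * gen 0 * gen 1 * gen 0,
    gen 2 * gen 1 * gen 0 * gen 1 * gen 0 * gen 2,
    gen 2 * gen 0 * gen 2 * gen 0,
    gen 2 * gen 1 * gen 2 * gen 1,
    gen 2 * gen 1 * gen 0 * gen 2 * gen 0 * gen 1]

theorem ofAdd_one_mul_self : (.ofAdd 1 : Multiplicative (ZMod 2)) * .ofAdd 1 = 1 := by
  decide

theorem transversal_mul (t : Cube) (s : Fin 3) :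
    transversal (cubeBasis s * t) * freeBasis (schreierLabel t s) = gen s * transversal t := by
  rcases eq_one_or_eq_ofAdd_one (t 0) with h0 | h0 <;>
    rcases eq_one_or_eq_ofAdd_one (t 1) with h1 | h1 <;>
    rcases eq_one_or_eq_ofAdd_one (t 2) with h2 | h2 <;>
    fin_cases s <;>
    simp [transversal, schreierLabel, orient, freeBasis, h0, h1, h2, mul_assoc,
      ofAdd_one_mul_self, gen_mul_self, gen_inv, gen_mul_gen_mul]

abbrev cubeAction : InvolutionCoprod (Fin 3) →* Equiv.Perm (Cube × FreeGroup (Fin 5)) :=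
  schreierAction cubeBasis schreierLabel cubeBasis_mul_self schreierLabel_mul_schreierLabel

theorem cubeAction_freeBasis_of :
    ∀ a : Fin 5, cubeAction (freeBasis (.of a)) (1, 1) = (1, .of a) := by
  decide

/-- the kernel of `θ : ℤ/2 ∗ ℤ/2 ∗ ℤ/2 → (ℤ/2)³` is a free group
of rank 5. -/
theorem ker_theta_free_of_rank_five : Nonempty (theta.ker ≃* FreeGroup (Fin 5)) :=
  nonempty_ker_mulEquiv_of_equivariant theta freeBasis cubeAction transversal transversal_one
    (fst_schreierAction _ _ _ _ theta theta_gen)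
    (rep_mul_schreierAction _ _ _ _ transversal freeBasis transversal_mul)
    (apply_one_one_of_apply_of freeBasis cubeAction (schreierAction_mul_right _ _ _ _)
      cubeAction_freeBasis_of)
end
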